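/- arXiv:2009.01332 — 2 statements merged into one kernel-verified Lean document; each statement's English description precedes it below -/
import Mathlib

section
/- For the mixed bilinear form A_M, for any pair (y,w) in Y × W one has A_M((y,w),(y,w)) = ∫₀^T ∫_Ω ( y_t² + (1/α) y² + w² ) dx dt + ∫_Ω ν |∇y(T)|² dx, and consequently A_M((y,w),(y,w)) ≥ |||(y,w)|||², where |||(y,w)|||² = ∫₀^T ∫_Ω ( y_t² + (1/α) y² + w² ) dx dt. -/
/-! The coupling terms `ν ⟪∇w, ∇y⟫` and `-ν ⟪∇y, ∇w⟫` of `A_M` are skew, so they cancel on the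
diagonal; what remains is `|||(y,w)|||²` plus the terminal energy `∫ ν |∇y(T)|²`, which is
nonnegative for `ν ≥ 0`. -/

open MeasureTheory

section
variable {X E : Type*} [MeasurableSpace X] [NormedAddCommGroup E] [InnerProductSpace ℝ E]

lemma integral_mixedForm_diag (μ : Measure X) (ν α : ℝ) (y yt w : X → ℝ) (grady gradw : X → E) :
    ∫ x, (yt x * yt x + ν * (inner ℝ (gradw x) (grady x) : ℝ) + (1/α) * (y x * y x)
        - ν * (inner ℝ (grady x) (gradw x) : ℝ) + w x * w x) ∂μ
      = ∫ x, ((yt x)^2 + (1/α) * (y x)^2 + (w x)^2) ∂μ := by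
  congr 1 with x
  rw [real_inner_comm (gradw x)]
  ring

lemma integral_mul_inner_self (μ : Measure X) (ν : ℝ) (g : X → E) :
    ∫ x, ν * (inner ℝ (g x) (g x) : ℝ) ∂μ = ∫ x, ν * ‖g x‖^2 ∂μ := by
  simp only [real_inner_self_eq_norm_sq]

lemma integral_mul_norm_sq_nonneg {F : Type*} [Norm F] (μ : Measure X) {ν : ℝ} (hν : 0 ≤ ν)
    (g : X → F) :
    0 ≤ ∫ x, ν * ‖g x‖^2 ∂μ :=
  integral_nonneg fun _ => by positivity

end

theorem stmt_3_general {XT Ωs : Type*} [MeasurableSpace XT] [MeasurableSpace Ωs]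
    (μ : Measure XT) (σ : Measure Ωs) {n : ℕ}
    (ν α : ℝ) (hν : 0 < ν)
    (y yt w : XT → ℝ) (grady gradw : XT → EuclideanSpace ℝ (Fin n))
    (gradyT : Ωs → EuclideanSpace ℝ (Fin n)) :
    ((∫ x, (yt x * yt x + ν * (inner ℝ (gradw x) (grady x) : ℝ) + (1/α) * (y x * y x)
          - ν * (inner ℝ (grady x) (gradw x) : ℝ) + w x * w x) ∂μ)
        + ∫ ω, ν * (inner ℝ (gradyT ω) (gradyT ω) : ℝ) ∂σ
      = (∫ x, ((yt x)^2 + (1/α) * (y x)^2 + (w x)^2) ∂μ)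
        + ∫ ω, ν * ‖gradyT ω‖^2 ∂σ) ∧
    ((∫ x, ((yt x)^2 + (1/α) * (y x)^2 + (w x)^2) ∂μ)
      ≤ (∫ x, (yt x * yt x + ν * (inner ℝ (gradw x) (grady x) : ℝ) + (1/α) * (y x * y x)
          - ν * (inner ℝ (grady x) (gradw x) : ℝ) + w x * w x) ∂μ)
        + ∫ ω, ν * (inner ℝ (gradyT ω) (gradyT ω) : ℝ) ∂σ) := by
  rw [integral_mixedForm_diag, integral_mul_inner_self]
  exact ⟨rfl, le_add_of_nonneg_right (integral_mul_norm_sq_nonneg σ hν.le gradyT)⟩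

/-- Diagonal identity and coercivity for the mixed bilinear form `A_M`:
`A_M((y,w),(y,w)) = ∫∫ y_t² + (1/α) y² + w² + ∫ ν |∇y(T)|² ≥ |||(y,w)|||²`. -/
theorem stmt_3 {XT Ωs : Type*} [MeasurableSpace XT] [MeasurableSpace Ωs]
    (μ : Measure XT) (σ : Measure Ωs) {n : ℕ}
    (ν α : ℝ) (hν : 0 < ν) (hα : 0 < α)
    (y yt w : XT → ℝ) (grady gradw : XT → EuclideanSpace ℝ (Fin n))
    (gradyT : Ωs → EuclideanSpace ℝ (Fin n)) :
    ((∫ x, (yt x * yt x + ν * (inner ℝ (gradw x) (grady x) : ℝ) + (1/α) * (y x * y x)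
          - ν * (inner ℝ (grady x) (gradw x) : ℝ) + w x * w x) ∂μ)
        + ∫ ω, ν * (inner ℝ (gradyT ω) (gradyT ω) : ℝ) ∂σ
      = (∫ x, ((yt x)^2 + (1/α) * (y x)^2 + (w x)^2) ∂μ)
        + ∫ ω, ν * ‖gradyT ω‖^2 ∂σ) ∧
    ((∫ x, ((yt x)^2 + (1/α) * (y x)^2 + (w x)^2) ∂μ)
      ≤ (∫ x, (yt x * yt x + ν * (inner ℝ (gradw x) (grady x) : ℝ) + (1/α) * (y x * y x)
          - ν * (inner ℝ (grady x) (gradw x) : ℝ) + w x * w x) ∂μ)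
        + ∫ ω, ν * (inner ℝ (gradyT ω) (gradyT ω) : ℝ) ∂σ) :=
  stmt_3_general μ σ ν α hν y yt w grady gradw gradyT
end

section
/- Let y solve the heat equation y_t − νΔy = f + u with y(0) = y₀ and homogeneous Dirichlet boundary conditions, and let p solve the adjoint equation −p_t − νΔp = y − y_d with p(T) = 0 and the same boundary conditions, and suppose αu + p = 0. Assuming sufficient regularity, y satisfies the fourth-order elliptic equation −y_tt + ν²Δ²y + (1/α)y = (1/α)y_d − f_t − νΔf a.e. in (0,T)×Ω, together with νΔy = −f on the boundary and (y_t − νΔy)(T) = f(T) in Ω. -/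
/-!
Differentiating the state equation in time gives `y_tt − νΔy_t = f_t + u_t`; differentiating the
optimality condition gives `α u_t = −p_t`, and the adjoint equation turns this into
`u_t = (y − y_d + νΔp)/α = (y − y_d)/α − νΔu`. Applying `Δ` to the state equation expresses
`Δu` through `Δy_t`, `Δ²y` and `Δf`, and the `Δy_t` terms cancel. On `∂Ω` and at `t = T` the
adjoint `p`, hence the control `u = −p/α`, vanishes, so there the state equation reduces to the
two extra conditions.
-/

open MeasureTheory Set

/-- The (Euclidean) Laplacian of `f : ℝⁿ → ℝ`, as the trace of the second derivative. -/
noncomputable def lap {n : ℕ} (f : EuclideanSpace ℝ (Fin n) → ℝ)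
    (x : EuclideanSpace ℝ (Fin n)) : ℝ :=
  ∑ i : Fin n, iteratedFDeriv ℝ 2 f x ![EuclideanSpace.single i 1, EuclideanSpace.single i 1]

open Filter Topology

theorem HasDerivAt.unique_of_eventuallyEq {𝕜 F : Type*} [NontriviallyNormedField 𝕜]
    [NormedAddCommGroup F] [NormedSpace 𝕜 F] {f g : 𝕜 → F} {f' g' : F} {x : 𝕜}
    (hf : HasDerivAt f f' x) (hg : HasDerivAt g g' x) (h : f =ᶠ[𝓝 x] g) : f' = g' :=
  hf.unique (hg.congr_of_eventuallyEq h)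

theorem stmt_13_general {n : ℕ} (Ω : Set (EuclideanSpace ℝ (Fin n)))
    (T ν α : ℝ) (hT : 0 < T) (hα : 0 < α)
    (y yt ytt p pt u ut f ft yd : ℝ → EuclideanSpace ℝ (Fin n) → ℝ)
    -- the given fields are genuine time derivatives
    (hytt : ∀ t x, HasDerivAt (fun s => yt s x) (ytt t x) t)
    (hpt : ∀ t x, HasDerivAt (fun s => p s x) (pt t x) t)
    (hut : ∀ t x, HasDerivAt (fun s => u s x) (ut t x) t)
    (hft : ∀ t x, HasDerivAt (fun s => f s x) (ft t x) t)
    -- regularity: time differentiation commutes with the Laplacian for `y`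
    (hlapyt : ∀ t x, HasDerivAt (fun s => lap (y s) x) (lap (yt t) x) t)
    -- state equation `y_t − νΔy = f + u`, initial and boundary conditions
    (hstate : ∀ t ∈ Icc (0:ℝ) T, ∀ x ∈ closure Ω,
      yt t x - ν * lap (y t) x = f t x + u t x)
    (hytbc : ∀ t ∈ Icc (0:ℝ) T, ∀ x ∈ frontier Ω, yt t x = 0)
    -- adjoint equation `−p_t − νΔp = y − y_d` with its end and boundary conditions
    (hadj : ∀ t ∈ Icc (0:ℝ) T, ∀ x ∈ closure Ω,
      -(pt t x) - ν * lap (p t) x = y t x - yd t x)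
    (hpT : ∀ x, p T x = 0)
    (hpbc : ∀ t ∈ Icc (0:ℝ) T, ∀ x ∈ frontier Ω, p t x = 0)
    -- optimality condition `αu + p = 0`
    (hopt : ∀ t x, α * u t x + p t x = 0)
    -- regularity: the Laplacian may be applied to the optimality system
    (hlapp : ∀ t x, lap (p t) x = -α * lap (u t) x)
    (hstatelap : ∀ t ∈ Icc (0:ℝ) T, ∀ x ∈ closure Ω,
      lap (yt t) x - ν * lap (fun z => lap (y t) z) x = lap (f t) x + lap (u t) x) :
    (∀ t ∈ Ioo (0:ℝ) T, ∀ x ∈ Ω,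
      -(ytt t x) + ν^2 * lap (fun z => lap (y t) z) x + (1/α) * y t x
        = (1/α) * yd t x - ft t x - ν * lap (f t) x) ∧
    (∀ t ∈ Icc (0:ℝ) T, ∀ x ∈ frontier Ω, ν * lap (y t) x = -(f t x)) ∧
    (∀ x ∈ Ω, yt T x - ν * lap (y T) x = f T x) := by
  have hu_eq_zero : ∀ t x, p t x = 0 → u t x = 0 := fun t x hp => by
    simpa [hp, hα.ne'] using hopt t x
  refine ⟨fun t ht x hx => ?_, fun t ht x hx => ?_, fun x hx => ?_⟩
  · have hIcc : ∀ᶠ s in 𝓝 t, s ∈ Icc 0 T :=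
      mem_of_superset (Ioo_mem_nhds ht.1 ht.2) Ioo_subset_Icc_self
    have hstate_t : ytt t x - ν * lap (yt t) x = ft t x + ut t x :=
      ((hytt t x).sub ((hlapyt t x).const_mul ν)).unique_of_eventuallyEq
        ((hft t x).add (hut t x)) (hIcc.mono fun s hs => hstate s hs x (subset_closure hx))
    have hopt_t : α * ut t x + pt t x = 0 :=
      (((hut t x).const_mul α).add (hpt t x)).unique_of_eventuallyEq (hasDerivAt_const t 0)
        (Eventually.of_forall fun s => hopt s x)
    have hIcc_t := mem_of_mem_nhds hIcc
    linear_combination (norm := (field_simp; ring)) -hstate_t - hopt_t / α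
      - hadj t hIcc_t x (subset_closure hx) / α - ν / α * hlapp t x
      - ν * hstatelap t hIcc_t x (subset_closure hx)
  · have hstate_x := hstate t ht x (frontier_subset_closure hx)
    rw [hytbc t ht x hx, hu_eq_zero t x (hpbc t ht x hx)] at hstate_x
    linarith
  · have hstate_T := hstate T (right_mem_Icc.mpr hT.le) x (subset_closure hx)
    rw [hu_eq_zero T x (hpT x)] at hstate_T
    linarith

/-- Reformulation of the optimality system `(heat eq, adjoint eq, αu + p = 0)` as a
fourth-order in space / second-order in time elliptic equation for the state `y`,
together with the extra boundary condition `νΔy = −f` on `∂Ω` and the end-time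
condition `(y_t − νΔy)(T) = f(T)`. -/
theorem stmt_13 {n : ℕ} (hn : 1 ≤ n) (hn3 : n ≤ 3)
    (Ω : Set (EuclideanSpace ℝ (Fin n))) (hΩopen : IsOpen Ω)
    (hΩbdd : Bornology.IsBounded Ω)
    (T ν α : ℝ) (hT : 0 < T) (hν : 0 < ν) (hα : 0 < α)
    (y yt ytt p pt u ut f ft yd : ℝ → EuclideanSpace ℝ (Fin n) → ℝ)
    (y0 : EuclideanSpace ℝ (Fin n) → ℝ)
    -- the given fields are genuine time derivatives
    (hyt : ∀ t x, HasDerivAt (fun s => y s x) (yt t x) t)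
    (hytt : ∀ t x, HasDerivAt (fun s => yt s x) (ytt t x) t)
    (hpt : ∀ t x, HasDerivAt (fun s => p s x) (pt t x) t)
    (hut : ∀ t x, HasDerivAt (fun s => u s x) (ut t x) t)
    (hft : ∀ t x, HasDerivAt (fun s => f s x) (ft t x) t)
    -- regularity: time differentiation commutes with the Laplacian for `y`
    (hlapyt : ∀ t x, HasDerivAt (fun s => lap (y s) x) (lap (yt t) x) t)
    -- state equation `y_t − νΔy = f + u`, initial and boundary conditions
    (hstate : ∀ t ∈ Icc (0:ℝ) T, ∀ x ∈ closure Ω,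
      yt t x - ν * lap (y t) x = f t x + u t x)
    (hy0 : ∀ x ∈ Ω, y 0 x = y0 x)
    (hybc : ∀ t ∈ Icc (0:ℝ) T, ∀ x ∈ frontier Ω, y t x = 0)
    (hytbc : ∀ t ∈ Icc (0:ℝ) T, ∀ x ∈ frontier Ω, yt t x = 0)
    -- adjoint equation `−p_t − νΔp = y − y_d` with its end and boundary conditions
    (hadj : ∀ t ∈ Icc (0:ℝ) T, ∀ x ∈ closure Ω,
      -(pt t x) - ν * lap (p t) x = y t x - yd t x)
    (hpT : ∀ x, p T x = 0)
    (hpbc : ∀ t ∈ Icc (0:ℝ) T, ∀ x ∈ frontier Ω, p t x = 0)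
    -- optimality condition `αu + p = 0`
    (hopt : ∀ t x, α * u t x + p t x = 0)
    -- regularity: the Laplacian may be applied to the optimality system
    (hlapp : ∀ t x, lap (p t) x = -α * lap (u t) x)
    (hstatelap : ∀ t ∈ Icc (0:ℝ) T, ∀ x ∈ closure Ω,
      lap (yt t) x - ν * lap (fun z => lap (y t) z) x = lap (f t) x + lap (u t) x) :
    (∀ t ∈ Ioo (0:ℝ) T, ∀ x ∈ Ω,
      -(ytt t x) + ν^2 * lap (fun z => lap (y t) z) x + (1/α) * y t x
        = (1/α) * yd t x - ft t x - ν * lap (f t) x) ∧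
    (∀ t ∈ Icc (0:ℝ) T, ∀ x ∈ frontier Ω, ν * lap (y t) x = -(f t x)) ∧
    (∀ x ∈ Ω, yt T x - ν * lap (y T) x = f T x) :=
  stmt_13_general Ω T ν α hT hα y yt ytt p pt u ut f ft yd hytt hpt hut hft hlapyt hstate hytbc hadj
    hpT hpbc hopt hlapp hstatelap
end
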